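/- Let l ∈ {K, D, T, K4, KD4, S4}, let (M,a) = ({a}∪W, R, V) and (M',a') = ({a'}∪W', R', V') be flat pointed models for l+5 in which every state of M is reachable from a via R and every state of M' is reachable from a' via R', and let P be a finite set of propositional variables. Then (M,a) ∼_P (M',a') if and only if V(a)∩P = V'(a')∩P and: for every b ∈ W there is some b' ∈ W' with V(b)∩P = V'(b')∩P; for every b' ∈ W' there is some b ∈ W with V(b)∩P = V'(b')∩P; for every b ∈ W with a R b there is some b' ∈ W' with a' R' b' and V(b)∩P = V'(b')∩P; and for every b' ∈ W' with a' R' b' there is some b ∈ W with a R b and V(b)∩P = V'(b')∩P. -/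

import Mathlib

/-- Modal formulas in negation normal form, as in the paper:
φ ::= ⊥ | ⊤ | p | ¬p | φ∧φ | φ∨φ | □φ | ◇φ. -/
inductive Form : Type where
  | bot : Form
  | top : Form
  | pos : ℕ → Form
  | npos : ℕ → Form
  | and : Form → Form → Form
  | or : Form → Form → Form
  | box : Form → Form
  | dia : Form → Form
deriving DecidableEq

namespace Form

/-- Negation, defined as usual (by De Morgan dualities). -/
def neg : Form → Form
  | bot => top
  | top => bot
  | pos p => npos p
  | npos p => pos p
  | and φ ψ => or φ.neg ψ.neg
  | or φ ψ => and φ.neg ψ.neg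
  | box φ => dia φ.neg
  | dia φ => box φ.neg

/-- Implication φ → ψ, defined as usual. -/
def imp (φ ψ : Form) : Form := or φ.neg ψ

/-- Bi-implication φ ↔ ψ, defined as usual. -/
def biimp (φ ψ : Form) : Form := and (imp φ ψ) (imp ψ φ)

/-- P(φ): the set of propositional variables occurring in φ. -/
def vars : Form → Finset ℕ
  | bot => ∅
  | top => ∅
  | pos p => {p}
  | npos p => {p}
  | and φ ψ => φ.vars ∪ ψ.vars
  | or φ ψ => φ.vars ∪ ψ.vars
  | box φ => φ.vars
  | dia φ => φ.vars

/-- Modal depth. -/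
def md : Form → ℕ
  | bot => 0
  | top => 0
  | pos _ => 0
  | npos _ => 0
  | and φ ψ => max φ.md ψ.md
  | or φ ψ => max φ.md ψ.md
  | box φ => φ.md + 1
  | dia φ => φ.md + 1

/-- sub(φ): the set of subformulas of φ. -/
def subf : Form → Finset Form
  | bot => {bot}
  | top => {top}
  | pos p => {pos p}
  | npos p => {npos p}
  | and φ ψ => insert (and φ ψ) (φ.subf ∪ ψ.subf)
  | or φ ψ => insert (or φ ψ) (φ.subf ∪ ψ.subf)
  | box φ => insert (box φ) φ.subf
  | dia φ => insert (dia φ) φ.subf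

/-- s̄ub(φ) = sub(φ) ∪ {¬ψ : ψ ∈ sub(φ)}. -/
def subBar (φ : Form) : Finset Form := φ.subf ∪ φ.subf.image neg

/-- □^k φ : k nested boxes. -/
def boxIter : ℕ → Form → Form
  | 0, φ => φ
  | n + 1, φ => box (boxIter n φ)

def isDia : Form → Bool
  | dia _ => true
  | _ => false

def isBox : Form → Bool
  | box _ => true
  | _ => false

end Form

/-- Big conjunction over a finite set of formulas (⋀∅ = ⊤). -/
noncomputable def bigAnd (s : Finset Form) : Form := s.toList.foldr Form.and Form.top

/-- Big disjunction over a finite set of formulas (⋁∅ = ⊥). -/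
noncomputable def bigOr (s : Finset Form) : Form := s.toList.foldr Form.or Form.bot

/-- th(a) = ⋀ a. -/
noncomputable def th (a : Finset Form) : Form := bigAnd a

/-- A finite Kripke model: a nonempty finite set of states, an accessibility
relation and a valuation. -/
structure Model : Type 1 where
  W : Type
  nonempty : Nonempty W
  finite : Finite W
  R : W → W → Prop
  V : W → Set ℕ

/-- Satisfaction M,w ⊨ φ. -/
def Model.sat (M : Model) : M.W → Form → Prop
  | _, .bot => False
  | _, .top => True
  | w, .pos p => p ∈ M.V w
  | w, .npos p => p ∉ M.V w
  | w, .and φ ψ => M.sat w φ ∧ M.sat w ψ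
  | w, .or φ ψ => M.sat w φ ∨ M.sat w ψ
  | w, .box φ => ∀ v, M.R w v → M.sat v φ
  | w, .dia φ => ∃ v, M.R w v ∧ M.sat v φ

/-- The six base logics K, D, T, K4, KD4, S4. -/
inductive BaseLogic : Type where
  | K | D | T | K4 | KD4 | S4
deriving DecidableEq

/-- A logic: a base logic, possibly extended by axiom 5. -/
structure Logic : Type where
  base : BaseLogic
  has5 : Bool
deriving DecidableEq

def Logic.K : Logic := ⟨.K, false⟩
def Logic.D : Logic := ⟨.D, false⟩
def Logic.T : Logic := ⟨.T, false⟩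
def Logic.K4 : Logic := ⟨.K4, false⟩
def Logic.KD4 : Logic := ⟨.KD4, false⟩
def Logic.S4 : Logic := ⟨.S4, false⟩

/-- l + 5. -/
def BaseLogic.plus5 (b : BaseLogic) : Logic := ⟨b, true⟩

/-- M is a model for the logic l (frame conditions). -/
def Model.IsFor (M : Model) (l : Logic) : Prop :=
  (match l.base with
    | .K => True
    | .D => ∀ w, ∃ v, M.R w v
    | .T => ∀ w, M.R w w
    | .K4 => ∀ a b c, M.R a b → M.R b c → M.R a c
    | .KD4 => (∀ w, ∃ v, M.R w v) ∧ (∀ a b c, M.R a b → M.R b c → M.R a c)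
    | .S4 => (∀ w, M.R w w) ∧ (∀ a b c, M.R a b → M.R b c → M.R a c))
  ∧ (l.has5 = true → ∀ a b c, M.R a b → M.R a c → M.R b c)

/-- φ is satisfiable for l: satisfied at some state of some finite model for l. -/
def Satisfiable (l : Logic) (φ : Form) : Prop :=
  ∃ M : Model, M.IsFor l ∧ ∃ w : M.W, M.sat w φ

/-- φ is valid for l: satisfied at every state of every finite model for l. -/
def Valid (l : Logic) (φ : Form) : Prop :=
  ∀ M : Model, M.IsFor l → ∀ w : M.W, M.sat w φ

/-- φ is complete for l: for every ψ ∈ L(P(φ)), φ→ψ or φ→¬ψ is valid for l. -/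
def Complete (l : Logic) (φ : Form) : Prop :=
  ∀ ψ : Form, ψ.vars ⊆ φ.vars → (Valid l (φ.imp ψ) ∨ Valid l (φ.imp ψ.neg))

/-- Z is a bisimulation modulo P from M to M'. -/
def IsBisim (P : Set ℕ) (M M' : Model) (Z : M.W → M'.W → Prop) : Prop :=
  (∃ s s', Z s s') ∧
  ∀ s s', Z s s' →
    (M.V s ∩ P = M'.V s' ∩ P) ∧
    (∀ t, M.R s t → ∃ t', M'.R s' t' ∧ Z t t') ∧
    (∀ t', M'.R s' t' → ∃ t, M.R s t ∧ Z t t')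

/-- (M,a) ∼_P (M',a'). -/
def Bisimilar (P : Set ℕ) (M : Model) (a : M.W) (M' : Model) (a' : M'.W) : Prop :=
  ∃ Z, IsBisim P M M' Z ∧ Z a a'

/-- (M,a) ≡_P (M',a'): the two pointed models satisfy the same formulas of L(P). -/
def EquivP (P : Set ℕ) (M : Model) (a : M.W) (M' : Model) (a' : M'.W) : Prop :=
  ∀ φ : Form, ↑φ.vars ⊆ P → (M.sat a φ ↔ M'.sat a' φ)

/-- (M,s) is flat (for base logic l, with axiom 5): the carrier is {s}∪W and
R = R1 ∪ R2 with R1 ⊆ {s}×W, R2 an equivalence relation on W, and s ∈ W if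
l ∈ {T,S4}. -/
def Flat (l : BaseLogic) (M : Model) (s : M.W) : Prop :=
  ∃ W : Set M.W, (∀ w, w = s ∨ w ∈ W) ∧
    ∃ R1 R2 : M.W → M.W → Prop,
      (∀ x y, M.R x y ↔ (R1 x y ∨ R2 x y)) ∧
      (∀ x y, R1 x y → x = s ∧ y ∈ W) ∧
      (∀ x y, R2 x y → x ∈ W ∧ y ∈ W) ∧
      (∀ x ∈ W, R2 x x) ∧
      (∀ x y, R2 x y → R2 y x) ∧
      (∀ x y z, R2 x y → R2 y z → R2 x z) ∧
      ((l = .T ∨ l = .S4) → s ∈ W)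

/-- A maximal state for l with respect to φ: a maximally l-consistent subset
of s̄ub(φ). -/
def MaxState (l : Logic) (φ : Form) (a : Finset Form) : Prop :=
  a ⊆ φ.subBar ∧ Satisfiable l (th a) ∧ ∀ ψ ∈ φ.subf, ψ ∈ a ∨ ψ.neg ∈ a

/-- D(x) = {◇ψ : ◇ψ ∈ x}. -/
def DSet (x : Finset Form) : Finset Form := x.filter (fun ψ => ψ.isDia = true)

/-- B(x) = {□ψ : □ψ ∈ x}. -/
def BSet (x : Finset Form) : Finset Form := x.filter (fun ψ => ψ.isBox = true)

/-- A view: a parent-state and a finite set of children-states. -/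
structure View : Type where
  parent : Finset Form
  children : Finset (Finset Form)

/-- The view is with respect to φ: all its states are subsets of s̄ub(φ). -/
def View.WF (φ : Form) (S : View) : Prop :=
  S.parent ⊆ φ.subBar ∧ ∀ c ∈ S.children, c ⊆ φ.subBar

/-- A set of formulas is l-closed. -/
def LClosed (l : Logic) (P : Finset ℕ) (s : Finset Form) : Prop :=
  (∀ φ1 φ2 : Form, Form.and φ1 φ2 ∈ s → φ1 ∈ s ∧ φ2 ∈ s) ∧
  (∀ φ1 φ2 : Form, Form.or φ1 φ2 ∈ s → φ1 ∈ s ∨ φ2 ∈ s) ∧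
  ((l.base = .T ∨ l.base = .S4) → ∀ ψ : Form, Form.box ψ ∈ s → ψ ∈ s) ∧
  (∀ p ∈ P, Form.pos p ∈ s ∨ Form.npos p ∈ s)

/-- The view S is l-complete. -/
def ViewLComplete (l : Logic) (P : Finset ℕ) (S : View) : Prop :=
  LClosed l P S.parent ∧
  (∀ c ∈ S.children, LClosed l P c) ∧
  (∀ ψ : Form, Form.dia ψ ∈ S.parent → ∃ c ∈ S.children, ψ ∈ c) ∧
  (∀ ψ : Form, Form.box ψ ∈ S.parent → ∀ c ∈ S.children, ψ ∈ c) ∧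
  ((l.base = .K4 ∨ l.base = .KD4 ∨ l.base = .S4) →
    ∀ ψ : Form, Form.box ψ ∈ S.parent → ∀ c ∈ S.children, Form.box ψ ∈ c) ∧
  (l.base = .KD4 → S.children.Nonempty)

/-- The view S is consistent for l: every one of its states is consistent. -/
def ViewConsistent (l : Logic) (S : View) : Prop :=
  Satisfiable l (th S.parent) ∧ ∀ c ∈ S.children, Satisfiable l (th c)

/-- d = max{md(th(c')) : c' ∈ C(S)}. -/
noncomputable def childDepth (S : View) : ℕ := S.children.sup (fun c => (th c).md)

/-- A K-maximal child-state: a maximally K-consistent subset of s̄ub_d(φ). -/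
def KMaxChild (φ : Form) (d : ℕ) (c : Finset Form) : Prop :=
  c ⊆ φ.subBar.filter (fun ψ => ψ.md ≤ d) ∧
  Satisfiable Logic.K (th c) ∧
  ∀ ψ ∈ φ.subf, ψ.md ≤ d → (ψ ∈ c ∨ ψ.neg ∈ c)

/-- S' completes S (for logic l, with respect to φ). -/
def ViewCompletes (l : Logic) (φ : Form) (S' S : View) : Prop :=
  ViewLComplete l φ.vars S' ∧
  S.parent ⊆ S'.parent ∧
  (∀ a ∈ S.children, ∃ a' ∈ S'.children, a ⊆ a') ∧
  (l.base = .K → ∀ a' ∈ S'.children, KMaxChild φ (childDepth S') a') ∧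
  (l.base ≠ .K → ∀ a' ∈ S'.children, MaxState l φ a')

/-- The depth-0 normal form ⋀_{p∈S} p ∧ ⋀_{p∈P∖S} ¬p. -/
noncomputable def nf0 (P S : Finset ℕ) : Form :=
  Form.and (bigAnd (S.image Form.pos)) (bigAnd ((P \ S).image Form.npos))

/-- Fine's normal forms F_P^d. -/
noncomputable def NF (P : Finset ℕ) : ℕ → Set Form
  | 0 => { χ | ∃ S ⊆ P, χ = nf0 P S }
  | d + 1 => { χ | ∃ S : Finset Form, ↑S ⊆ NF P d ∧ ∃ S0 ⊆ P,
      χ = Form.and (nf0 P S0)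
            (Form.and (bigAnd (S.image Form.dia)) (Form.box (bigOr S))) }

/-- φ is complete up to its depth for l. -/
def CompleteUpToDepth (l : Logic) (φ : Form) : Prop :=
  ∀ ψ : Form, ψ.vars ⊆ φ.vars → ψ.md ≤ φ.md →
    (Valid l (φ.imp ψ) ∨ Valid l (φ.imp ψ.neg))

/-!
In a flat euclidean model generated by its root `a`, the set `W` is a single cluster containing
every successor, and each of its states is seen from a successor of `a`. A bisimulation modulo `P`
between two such models therefore only has to match the roots, the successors of the roots, and
the cluster states, each up to their valuation on `P`; relating the roots together with all
`P`-equivalent pairs of cluster states does exactly that.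
-/

structure Model.IsRootedCluster (M : Model) (a : M.W) (W : Set M.W) : Prop where
  mem_of_rel : ∀ {x y}, M.R x y → y ∈ W
  rel_of_mem : ∀ {x}, x ∈ W → ∀ {y}, y ∈ W → M.R x y
  exists_rel_rel : ∀ {b}, b ∈ W → ∃ t, M.R a t ∧ M.R t b

namespace Model.IsRootedCluster

variable {P : Set ℕ} {M M' : Model} {a : M.W} {a' : M'.W} {W : Set M.W} {W' : Set M'.W}

theorem bisimilar_imp (hM : M.IsRootedCluster a W) (hM' : M'.IsRootedCluster a' W')
    (h : Bisimilar P M a M' a') :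
    M.V a ∩ P = M'.V a' ∩ P ∧
      (∀ b ∈ W, ∃ b' ∈ W', M.V b ∩ P = M'.V b' ∩ P) ∧
      (∀ b' ∈ W', ∃ b ∈ W, M.V b ∩ P = M'.V b' ∩ P) ∧
      (∀ b ∈ W, M.R a b → ∃ b' ∈ W', M'.R a' b' ∧ M.V b ∩ P = M'.V b' ∩ P) ∧
      (∀ b' ∈ W', M'.R a' b' → ∃ b ∈ W, M.R a b ∧ M.V b ∩ P = M'.V b' ∩ P) := by
  obtain ⟨Z, ⟨-, hZ⟩, hZa⟩ := h
  obtain ⟨hval, hforth, hback⟩ := hZ a a' hZa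
  refine ⟨hval, fun b hb => ?_, fun b' hb' => ?_, fun b _ hab => ?_, fun b' _ hab' => ?_⟩
  · obtain ⟨t, hat, htb⟩ := hM.exists_rel_rel hb
    obtain ⟨t', -, hZt⟩ := hforth t hat
    obtain ⟨b', htb', hZb⟩ := (hZ t t' hZt).2.1 b htb
    exact ⟨b', hM'.mem_of_rel htb', (hZ b b' hZb).1⟩
  · obtain ⟨t', hat', htb'⟩ := hM'.exists_rel_rel hb'
    obtain ⟨t, -, hZt⟩ := hback t' hat'
    obtain ⟨b, htb, hZb⟩ := (hZ t t' hZt).2.2 b' htb'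
    exact ⟨b, hM.mem_of_rel htb, (hZ b b' hZb).1⟩
  · obtain ⟨b', hab', hZb⟩ := hforth b hab
    exact ⟨b', hM'.mem_of_rel hab', hab', (hZ b b' hZb).1⟩
  · obtain ⟨b, hab, hZb⟩ := hback b' hab'
    exact ⟨b, hM.mem_of_rel hab, hab, (hZ b b' hZb).1⟩

def rootedRel (P : Set ℕ) (a : M.W) (a' : M'.W) (W : Set M.W) (W' : Set M'.W) :
    M.W → M'.W → Prop :=
  fun x x' => (x = a ∧ x' = a') ∨ (x ∈ W ∧ x' ∈ W' ∧ M.V x ∩ P = M'.V x' ∩ P)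

theorem isBisim_rootedRel (hM : M.IsRootedCluster a W) (hM' : M'.IsRootedCluster a' W')
    (hval : M.V a ∩ P = M'.V a' ∩ P)
    (hcover : ∀ b ∈ W, ∃ b' ∈ W', M.V b ∩ P = M'.V b' ∩ P)
    (hcover' : ∀ b' ∈ W', ∃ b ∈ W, M.V b ∩ P = M'.V b' ∩ P)
    (hforth : ∀ b ∈ W, M.R a b → ∃ b' ∈ W', M'.R a' b' ∧ M.V b ∩ P = M'.V b' ∩ P)
    (hback : ∀ b' ∈ W', M'.R a' b' → ∃ b ∈ W, M.R a b ∧ M.V b ∩ P = M'.V b' ∩ P) :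
    IsBisim P M M' (rootedRel P a a' W W') := by
  refine ⟨⟨a, a', .inl ⟨rfl, rfl⟩⟩, ?_⟩
  rintro s s' (⟨rfl, rfl⟩ | ⟨hs, hs', hval⟩)
  · refine ⟨hval, fun t hat => ?_, fun t' hat' => ?_⟩
    · obtain ⟨t', ht', hat', hv⟩ := hforth t (hM.mem_of_rel hat) hat
      exact ⟨t', hat', .inr ⟨hM.mem_of_rel hat, ht', hv⟩⟩
    · obtain ⟨t, ht, hat, hv⟩ := hback t' (hM'.mem_of_rel hat') hat'
      exact ⟨t, hat, .inr ⟨ht, hM'.mem_of_rel hat', hv⟩⟩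
  · refine ⟨hval, fun t hst => ?_, fun t' hst' => ?_⟩
    · obtain ⟨t', ht', hv⟩ := hcover t (hM.mem_of_rel hst)
      exact ⟨t', hM'.rel_of_mem hs' ht', .inr ⟨hM.mem_of_rel hst, ht', hv⟩⟩
    · obtain ⟨t, ht, hv⟩ := hcover' t' (hM'.mem_of_rel hst')
      exact ⟨t, hM.rel_of_mem hs ht, .inr ⟨ht, hM'.mem_of_rel hst', hv⟩⟩

theorem bisimilar_iff (hM : M.IsRootedCluster a W) (hM' : M'.IsRootedCluster a' W') :
    Bisimilar P M a M' a' ↔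
      (M.V a ∩ P = M'.V a' ∩ P ∧
        (∀ b ∈ W, ∃ b' ∈ W', M.V b ∩ P = M'.V b' ∩ P) ∧
        (∀ b' ∈ W', ∃ b ∈ W, M.V b ∩ P = M'.V b' ∩ P) ∧
        (∀ b ∈ W, M.R a b → ∃ b' ∈ W', M'.R a' b' ∧ M.V b ∩ P = M'.V b' ∩ P) ∧
        (∀ b' ∈ W', M'.R a' b' → ∃ b ∈ W, M.R a b ∧ M.V b ∩ P = M'.V b' ∩ P)) :=
  ⟨hM.bisimilar_imp hM', fun ⟨hval, hcover, hcover', hforth, hback⟩ =>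
    ⟨_, isBisim_rootedRel hM hM' hval hcover hcover' hforth hback, .inl ⟨rfl, rfl⟩⟩⟩

end Model.IsRootedCluster

structure Model.IsFlatSplit (M : Model) (a : M.W) (W : Set M.W) (R1 R2 : M.W → M.W → Prop) :
    Prop where
  rel_iff : ∀ x y, M.R x y ↔ (R1 x y ∨ R2 x y)
  r1_spec : ∀ x y, R1 x y → x = a ∧ y ∈ W
  r2_spec : ∀ x y, R2 x y → x ∈ W ∧ y ∈ W
  r2_refl : ∀ x ∈ W, R2 x x
  r2_symm : ∀ x y, R2 x y → R2 y x
  r2_trans : ∀ x y z, R2 x y → R2 y z → R2 x z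

namespace Model.IsFlatSplit

variable {M : Model} {a : M.W} {W : Set M.W} {R1 R2 : M.W → M.W → Prop}

theorem mem_of_rel (hF : M.IsFlatSplit a W R1 R2) {x y : M.W} (h : M.R x y) : y ∈ W :=
  ((hF.rel_iff x y).1 h).elim (fun h => (hF.r1_spec x y h).2) (fun h => (hF.r2_spec x y h).2)

theorem exists_rel_root_of_reachable (hF : M.IsFlatSplit a W R1 R2) {w : M.W}
    (hw : Relation.ReflTransGen M.R a w) (hwW : w ∈ W) : ∃ t, M.R a t ∧ R2 t w := by
  induction hw with
  | refl => exact ⟨a, (hF.rel_iff a a).2 (.inr (hF.r2_refl a hwW)), hF.r2_refl a hwW⟩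
  | @tail b c _ hbc ih =>
    rcases (hF.rel_iff b c).1 hbc with h | h
    · obtain ⟨rfl, hc⟩ := hF.r1_spec b c h
      exact ⟨c, hbc, hF.r2_refl c hc⟩
    · obtain ⟨t, hat, htb⟩ := ih (hF.r2_spec b c h).1
      exact ⟨t, hat, hF.r2_trans t b c htb h⟩

theorem r2_of_rel_root (hF : M.IsFlatSplit a W R1 R2)
    (heuc : ∀ x y z, M.R x y → M.R x z → M.R y z) {t u : M.W} (hat : M.R a t)
    (hau : M.R a u) : R2 t u := by
  rcases (hF.rel_iff t u).1 (heuc a t u hat hau) with htu | htu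
  · obtain rfl := (hF.r1_spec t u htu).1
    rcases (hF.rel_iff u t).1 (heuc t u t hau hat) with hut | hut
    · obtain rfl := (hF.r1_spec u t hut).1
      exact hF.r2_refl u (hF.mem_of_rel hat)
    · exact hF.r2_symm u t hut
  · exact htu

/-- Every state of `W` is `R2`-related to a successor of the root, and by euclideanness the
successors of the root are pairwise `R2`-related; hence `W` is a single cluster. -/
theorem isRootedCluster (hF : M.IsFlatSplit a W R1 R2)
    (heuc : ∀ x y z, M.R x y → M.R x z → M.R y z)
    (hreach : ∀ w, Relation.ReflTransGen M.R a w) : M.IsRootedCluster a W where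
  mem_of_rel := hF.mem_of_rel
  rel_of_mem {x} hx {y} hy := by
    obtain ⟨t, hat, htx⟩ := hF.exists_rel_root_of_reachable (hreach x) hx
    obtain ⟨u, hau, huy⟩ := hF.exists_rel_root_of_reachable (hreach y) hy
    have htu := hF.r2_of_rel_root heuc hat hau
    exact (hF.rel_iff x y).2
      (.inr (hF.r2_trans x t y (hF.r2_symm t x htx) (hF.r2_trans t u y htu huy)))
  exists_rel_rel {b} hb := by
    obtain ⟨t, hat, htb⟩ := hF.exists_rel_root_of_reachable (hreach b) hb
    exact ⟨t, hat, (hF.rel_iff t b).2 (.inr htb)⟩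

end Model.IsFlatSplit

theorem stmt3_general (l : BaseLogic) (P : Finset ℕ)
    (M : Model) (a : M.W) (Wset : Set M.W) (R1 R2 : M.W → M.W → Prop)
    (M' : Model) (a' : M'.W) (Wset' : Set M'.W) (R1' R2' : M'.W → M'.W → Prop)
    (hM : M.IsFor l.plus5) (hM' : M'.IsFor l.plus5)
    -- (M,a) is flat, with carrier {a} ∪ Wset and R = R1 ∪ R2:
    (hR : ∀ x y, M.R x y ↔ (R1 x y ∨ R2 x y))
    (hR1 : ∀ x y, R1 x y → x = a ∧ y ∈ Wset)
    (hR2 : ∀ x y, R2 x y → x ∈ Wset ∧ y ∈ Wset)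
    (hrefl : ∀ x ∈ Wset, R2 x x)
    (hsymm : ∀ x y, R2 x y → R2 y x)
    (htrans : ∀ x y z, R2 x y → R2 y z → R2 x z)
    -- (M',a') is flat, with carrier {a'} ∪ Wset' and R' = R1' ∪ R2':
    (hR' : ∀ x y, M'.R x y ↔ (R1' x y ∨ R2' x y))
    (hR1' : ∀ x y, R1' x y → x = a' ∧ y ∈ Wset')
    (hR2' : ∀ x y, R2' x y → x ∈ Wset' ∧ y ∈ Wset')
    (hrefl' : ∀ x ∈ Wset', R2' x x)
    (hsymm' : ∀ x y, R2' x y → R2' y x)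
    (htrans' : ∀ x y z, R2' x y → R2' y z → R2' x z)
    -- every state is reachable from the distinguished point:
    (hreach : ∀ w, Relation.ReflTransGen M.R a w)
    (hreach' : ∀ w, Relation.ReflTransGen M'.R a' w) :
    Bisimilar ↑P M a M' a' ↔
      (M.V a ∩ ↑P = M'.V a' ∩ ↑P ∧
       (∀ b ∈ Wset, ∃ b' ∈ Wset', M.V b ∩ ↑P = M'.V b' ∩ ↑P) ∧
       (∀ b' ∈ Wset', ∃ b ∈ Wset, M.V b ∩ ↑P = M'.V b' ∩ ↑P) ∧
       (∀ b ∈ Wset, M.R a b →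
          ∃ b' ∈ Wset', M'.R a' b' ∧ M.V b ∩ ↑P = M'.V b' ∩ ↑P) ∧
       (∀ b' ∈ Wset', M'.R a' b' →
          ∃ b ∈ Wset, M.R a b ∧ M.V b ∩ ↑P = M'.V b' ∩ ↑P)) :=
  have hF : M.IsFlatSplit a Wset R1 R2 := ⟨hR, hR1, hR2, hrefl, hsymm, htrans⟩
  have hF' : M'.IsFlatSplit a' Wset' R1' R2' := ⟨hR', hR1', hR2', hrefl', hsymm', htrans'⟩
  (hF.isRootedCluster (hM.2 rfl) hreach).bisimilar_iff
    (hF'.isRootedCluster (hM'.2 rfl) hreach')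

/-- characterization of bisimilarity modulo P between flat
pointed models for l+5 all of whose states are reachable from the point. -/
theorem stmt3 (l : BaseLogic) (P : Finset ℕ)
    (M : Model) (a : M.W) (Wset : Set M.W) (R1 R2 : M.W → M.W → Prop)
    (M' : Model) (a' : M'.W) (Wset' : Set M'.W) (R1' R2' : M'.W → M'.W → Prop)
    (hM : M.IsFor l.plus5) (hM' : M'.IsFor l.plus5)
    -- (M,a) is flat, with carrier {a} ∪ Wset and R = R1 ∪ R2:
    (hW : ∀ w, w = a ∨ w ∈ Wset)
    (hR : ∀ x y, M.R x y ↔ (R1 x y ∨ R2 x y))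
    (hR1 : ∀ x y, R1 x y → x = a ∧ y ∈ Wset)
    (hR2 : ∀ x y, R2 x y → x ∈ Wset ∧ y ∈ Wset)
    (hrefl : ∀ x ∈ Wset, R2 x x)
    (hsymm : ∀ x y, R2 x y → R2 y x)
    (htrans : ∀ x y z, R2 x y → R2 y z → R2 x z)
    (hT : (l = BaseLogic.T ∨ l = BaseLogic.S4) → a ∈ Wset)
    -- (M',a') is flat, with carrier {a'} ∪ Wset' and R' = R1' ∪ R2':
    (hW' : ∀ w, w = a' ∨ w ∈ Wset')
    (hR' : ∀ x y, M'.R x y ↔ (R1' x y ∨ R2' x y))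
    (hR1' : ∀ x y, R1' x y → x = a' ∧ y ∈ Wset')
    (hR2' : ∀ x y, R2' x y → x ∈ Wset' ∧ y ∈ Wset')
    (hrefl' : ∀ x ∈ Wset', R2' x x)
    (hsymm' : ∀ x y, R2' x y → R2' y x)
    (htrans' : ∀ x y z, R2' x y → R2' y z → R2' x z)
    (hT' : (l = BaseLogic.T ∨ l = BaseLogic.S4) → a' ∈ Wset')
    -- every state is reachable from the distinguished point:
    (hreach : ∀ w, Relation.ReflTransGen M.R a w)
    (hreach' : ∀ w, Relation.ReflTransGen M'.R a' w) :
    Bisimilar ↑P M a M' a' ↔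
      (M.V a ∩ ↑P = M'.V a' ∩ ↑P ∧
       (∀ b ∈ Wset, ∃ b' ∈ Wset', M.V b ∩ ↑P = M'.V b' ∩ ↑P) ∧
       (∀ b' ∈ Wset', ∃ b ∈ Wset, M.V b ∩ ↑P = M'.V b' ∩ ↑P) ∧
       (∀ b ∈ Wset, M.R a b →
          ∃ b' ∈ Wset', M'.R a' b' ∧ M.V b ∩ ↑P = M'.V b' ∩ ↑P) ∧
       (∀ b' ∈ Wset', M'.R a' b' →
          ∃ b ∈ Wset, M.R a b ∧ M.V b ∩ ↑P = M'.V b' ∩ ↑P)) :=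
  stmt3_general l P M a Wset R1 R2 M' a' Wset' R1' R2' hM hM' hR hR1 hR2 hrefl hsymm htrans hR' hR1'
    hR2' hrefl' hsymm' htrans' hreach hreach'
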